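/- arXiv:2303.10705 — 2 statements merged into one kernel-verified Lean document; each statement's English description precedes it below -/
import Mathlib

section
/- The forward and reverse geodesic point sets coincide: ∪_{x ∈ X_src} Γ*_x = ∪_{x ∈ X_dst} Γ̃*_x. Moreover, if this common set is nonempty, then inf_{x ∈ K_src} v_→d(x) = inf_{x ∈ K_dst} v_s←(x) and inf_{x ∈ K_src} T_→d(x) = inf_{x ∈ K_dst} T_s←(x). -/
open Set Metric MeasureTheory
open scoped ENNReal

noncomputable section

/-- Points of the `d`-dimensional Euclidean space. -/
abbrev Pt (d : ℕ) := EuclideanSpace ℝ (Fin d)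

/-- A control: a measurable map valued in the unit sphere. -/
def IsControl {d : ℕ} (α : ℝ → Pt d) : Prop :=
  Measurable α ∧ ∀ t, ‖α t‖ = 1

/-- Admissible trajectory (in integral form, i.e. an absolutely continuous solution of the
controlled ODE) with control `α`, constrained to stay in `K`, with direction sign `σ`
(`σ = 1`: forward dynamics `y' = f(y,α)·α`; `σ = -1`: reverse dynamics `y' = -f(y,α)·α`),
starting at `x`, with horizon `τ`. -/
def IsTrajCtrl {d : ℕ} (K : Set (Pt d)) (f : Pt d → Pt d → ℝ) (σ : ℝ)
    (x : Pt d) (τ : ℝ) (y α : ℝ → Pt d) : Prop :=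
  0 ≤ τ ∧ y 0 = x ∧ (∀ t ∈ Icc 0 τ, y t ∈ K) ∧ IsControl α ∧
    ∀ t ∈ Icc 0 τ, y t = x + ∫ s in (0:ℝ)..t, (σ * f (y s) (α s)) • α s

/-- Admissible trajectory, for some control. -/
def IsTraj {d : ℕ} (K : Set (Pt d)) (f : Pt d → Pt d → ℝ) (σ : ℝ)
    (x : Pt d) (τ : ℝ) (y : ℝ → Pt d) : Prop :=
  ∃ α, IsTrajCtrl K f σ x τ y α

/-- Set of horizons of admissible trajectories from `x` ending in `target`. -/
def reachTimes {d : ℕ} (K : Set (Pt d)) (f : Pt d → Pt d → ℝ) (σ : ℝ)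
    (target : Set (Pt d)) (x : Pt d) : Set ℝ :=
  {τ | ∃ y : ℝ → Pt d, IsTraj K f σ x τ y ∧ y τ ∈ target}

/-- Minimum time, `∞` if the target is unreachable (`inf ∅ = ∞`). -/
def minTime {d : ℕ} (K : Set (Pt d)) (f : Pt d → Pt d → ℝ) (σ : ℝ)
    (target : Set (Pt d)) (x : Pt d) : ℝ≥0∞ :=
  ⨅ τ ∈ reachTimes K f σ target x, ENNReal.ofReal τ

/-- Kruzkov transform `1 - e^{-T}`, with the convention `e^{-∞} = 0`. -/
def kruzkov (T : ℝ≥0∞) : ℝ := if T = ∞ then 1 else 1 - Real.exp (-T.toReal)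

/-- Value function (Kruzkov transform of the minimum time). -/
def val {d : ℕ} (K : Set (Pt d)) (f : Pt d → Pt d → ℝ) (σ : ℝ)
    (target : Set (Pt d)) (x : Pt d) : ℝ :=
  kruzkov (minTime K f σ target x)

/-- Geodesic points from `x`: points `y(t)` of optimal trajectories from `x` to `target`. -/
def geodPts {d : ℕ} (K : Set (Pt d)) (f : Pt d → Pt d → ℝ) (σ : ℝ)
    (target : Set (Pt d)) (x : Pt d) : Set (Pt d) :=
  {p | ∃ τ y, IsTraj K f σ x τ y ∧ y τ ∈ target ∧
    ENNReal.ofReal τ = minTime K f σ target x ∧ ∃ t ∈ Icc 0 τ, p = y t}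

/-- δ-geodesic points from `x`: points `y(t)` of δ-optimal trajectories from `x` to `target`. -/
def deltaGeodPts {d : ℕ} (K : Set (Pt d)) (f : Pt d → Pt d → ℝ) (σ : ℝ)
    (target : Set (Pt d)) (x : Pt d) (δ : ℝ) : Set (Pt d) :=
  {p | ∃ τ y, IsTraj K f σ x τ y ∧ y τ ∈ target ∧
    1 - Real.exp (-τ) ≤ val K f σ target x + δ ∧ ∃ t ∈ Icc 0 τ, p = y t}

/-- The setting of the minimum time problem: a nonempty bounded open domain `Ω ⊆ ℝ^d` with
`d ≥ 1`, a positive continuous bounded Lipschitz speed function `f` on `cl(Ω) × S₁`, and two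
disjoint nonempty compact subsets `K_src, K_dst` of `Ω`. -/
structure Setting (d : ℕ) where
  Ω : Set (Pt d)
  f : Pt d → Pt d → ℝ
  Mf : ℝ
  Lf : ℝ
  Lfa : ℝ
  Ksrc : Set (Pt d)
  Kdst : Set (Pt d)
  hd : 1 ≤ d
  hΩopen : IsOpen Ω
  hΩbdd : Bornology.IsBounded Ω
  hΩne : Ω.Nonempty
  hfcont : ContinuousOn (fun p : Pt d × Pt d => f p.1 p.2) (closure Ω ×ˢ sphere (0 : Pt d) 1)
  hfpos : ∀ x ∈ closure Ω, ∀ a ∈ sphere (0 : Pt d) 1, 0 < f x a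
  hfbdd : ∀ x ∈ closure Ω, ∀ a ∈ sphere (0 : Pt d) 1, f x a ≤ Mf
  hfLipx : ∀ a ∈ sphere (0 : Pt d) 1, ∀ x ∈ closure Ω, ∀ x' ∈ closure Ω,
    |f x a - f x' a| ≤ Lf * ‖x - x'‖
  hfLipa : ∀ x ∈ closure Ω, ∀ a ∈ sphere (0 : Pt d) 1, ∀ a' ∈ sphere (0 : Pt d) 1,
    |f x a - f x a'| ≤ Lfa * ‖a - a'‖
  hKsrcComp : IsCompact Ksrc
  hKdstComp : IsCompact Kdst
  hKsrcNe : Ksrc.Nonempty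
  hKdstNe : Kdst.Nonempty
  hKsrcSub : Ksrc ⊆ Ω
  hKdstSub : Kdst ⊆ Ω
  hKdisj : Disjoint Ksrc Kdst

namespace Setting

variable {d : ℕ} (S : Setting d)

/-- Minimum time to destination `T_→d`. -/
def Td (x : Pt d) : ℝ≥0∞ := minTime (closure S.Ω) S.f 1 S.Kdst x

/-- Minimum time from source `T_s←` (reverse dynamics). -/
def Ts (x : Pt d) : ℝ≥0∞ := minTime (closure S.Ω) S.f (-1) S.Ksrc x

/-- Value function to destination `v_→d = 1 - e^{-T_→d}`. -/
def vd (x : Pt d) : ℝ := val (closure S.Ω) S.f 1 S.Kdst x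

/-- Value function from source `v_s← = 1 - e^{-T_s←}`. -/
def vs (x : Pt d) : ℝ := val (closure S.Ω) S.f (-1) S.Ksrc x

/-- State-constrained value function to destination: trajectories confined to `K`. -/
def vdC (K : Set (Pt d)) (x : Pt d) : ℝ := val K S.f 1 S.Kdst x

/-- State-constrained value function from source: trajectories confined to `K`. -/
def vsC (K : Set (Pt d)) (x : Pt d) : ℝ := val K S.f (-1) S.Ksrc x

/-- `F_v(x) = v_s←(x) + v_→d(x) − v_s←(x)·v_→d(x)`. -/
def Fv (x : Pt d) : ℝ := S.vs x + S.vd x - S.vs x * S.vd x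

/-- The neighborhood `O_η` of the optimal trajectories. -/
def Oset (η : ℝ) : Set (Pt d) :=
  {x ∈ S.Ω \ (S.Ksrc ∪ S.Kdst) | S.Fv x < sInf (S.Fv '' S.Ω) + η}

/-- `X_src = Argmin_{x ∈ K_src} v_→d(x)`. -/
def Xsrc : Set (Pt d) := {x ∈ S.Ksrc | ∀ z ∈ S.Ksrc, S.vd x ≤ S.vd z}

/-- `X_dst = Argmin_{x ∈ K_dst} v_s←(x)`. -/
def Xdst : Set (Pt d) := {x ∈ S.Kdst | ∀ z ∈ S.Kdst, S.vs x ≤ S.vs z}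

/-- The set of forward geodesic points `∪_{x ∈ X_src} Γ*_x`. -/
def GammaFwd : Set (Pt d) := ⋃ x ∈ S.Xsrc, geodPts (closure S.Ω) S.f 1 S.Kdst x

/-- The set of reverse geodesic points `∪_{x ∈ X_dst} Γ̃*_x`. -/
def GammaRev : Set (Pt d) := ⋃ x ∈ S.Xdst, geodPts (closure S.Ω) S.f (-1) S.Ksrc x

/-- `v* = inf_{x ∈ K_src} v_→d(x)`. -/
def vStar : ℝ := sInf (S.vd '' S.Ksrc)

/-- `X_src^δ = {x ∈ ∂K_src : v_→d(x) ≤ v* + δ}`. -/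
def XsrcD (δ : ℝ) : Set (Pt d) := {x ∈ frontier S.Ksrc | S.vd x ≤ S.vStar + δ}

/-- `X_dst^δ = {x ∈ ∂K_dst : v_s←(x) ≤ v* + δ}`. -/
def XdstD (δ : ℝ) : Set (Pt d) := {x ∈ frontier S.Kdst | S.vs x ≤ S.vStar + δ}

/-- The set of forward δ-geodesic points `Γ^δ`. -/
def GammaD (δ : ℝ) : Set (Pt d) :=
  ⋃ δ' ∈ Icc (0:ℝ) δ, ⋃ x ∈ S.XsrcD (δ - δ'), deltaGeodPts (closure S.Ω) S.f 1 S.Kdst x δ'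

/-- The set of reverse δ-geodesic points. -/
def GammaDRev (δ : ℝ) : Set (Pt d) :=
  ⋃ δ' ∈ Icc (0:ℝ) δ, ⋃ x ∈ S.XdstD (δ - δ'), deltaGeodPts (closure S.Ω) S.f (-1) S.Ksrc x δ'

end Setting


section Aux

lemma kruzkov_strictMono : StrictMono kruzkov := by
  intro a b hab
  have ha : a ≠ ∞ := (hab.trans_le le_top).ne
  by_cases hb : b = ∞
  · simp only [kruzkov, ha, hb, if_false, if_true]
    exact sub_lt_self _ (Real.exp_pos _)
  · simp only [kruzkov, ha, hb, if_false]
    have h1 : a.toReal < b.toReal := (ENNReal.toReal_lt_toReal ha hb).2 hab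
    have h2 : Real.exp (-b.toReal) < Real.exp (-a.toReal) := Real.exp_lt_exp.2 (by linarith)
    linarith

lemma kruzkov_le_iff {a b : ℝ≥0∞} : kruzkov a ≤ kruzkov b ↔ a ≤ b :=
  kruzkov_strictMono.le_iff_le

end Aux

namespace Setting

variable {d : ℕ} (S : Setting d)

lemma f_bound {x a : Pt d} (hx : x ∈ closure S.Ω) (ha : ‖a‖ = 1) (σ : ℝ) :
    ‖(σ * S.f x a) • a‖ ≤ |σ| * S.Mf := by
  have ha' : a ∈ sphere (0 : Pt d) 1 := by rwa [mem_sphere_zero_iff_norm]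
  rw [norm_smul, ha, mul_one, Real.norm_eq_abs, abs_mul]
  refine mul_le_mul_of_nonneg_left ?_ (abs_nonneg σ)
  rw [abs_of_pos (S.hfpos x hx a ha')]
  exact S.hfbdd x hx a ha'

lemma meas_const_pt {x : Pt d} (hx : x ∈ closure S.Ω) {α : ℝ → Pt d}
    (hα : IsControl α) (σ : ℝ) :
    Measurable fun s => (σ * S.f x (α s)) • α s := by
  have hsub : ∀ s, α s ∈ sphere (0 : Pt d) 1 := fun s => by
    rw [mem_sphere_zero_iff_norm]; exact hα.2 s
  have h1 : ContinuousOn (fun a : Pt d => S.f x a) (sphere 0 1) := by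
    have := S.hfcont.comp (Continuous.continuousOn
      (continuous_const.prodMk continuous_id : Continuous fun a : Pt d => (x, a)))
      (fun a ha => ⟨hx, ha⟩)
    exact this
  have hcont : ContinuousOn (fun a : Pt d => (σ * S.f x a) • a) (sphere 0 1) :=
    (continuousOn_const.mul h1).smul continuousOn_id
  have hms : Measurable fun s => (⟨α s, hsub s⟩ : sphere (0 : Pt d) 1) :=
    (hα.1).subtype_mk
  exact hcont.restrict.measurable.comp hms

lemma traj_integrable {σ τ : ℝ} {x : Pt d} {y α : ℝ → Pt d}
    (h : IsTrajCtrl (closure S.Ω) S.f σ x τ y α) :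
    IntegrableOn (fun s => (σ * S.f (y s) (α s)) • α s) (Ioc 0 τ) volume := by
  obtain ⟨hτ, hy0, hyK, hα, heq⟩ := h
  set g : ℝ → Pt d := fun s => (σ * S.f (y s) (α s)) • α s with hg
  have hbound : ∀ s ∈ Icc (0:ℝ) τ, ‖g s‖ ≤ |σ| * S.Mf := fun s hs =>
    S.f_bound (hyK s hs) (hα.2 s) σ
  set A : Set ℝ := {t | t ∈ Icc 0 τ ∧ IntegrableOn g (Ioc 0 t) volume} with hA
  have h0A : (0:ℝ) ∈ A := ⟨⟨le_rfl, hτ⟩, by rw [Set.Ioc_self]; exact integrableOn_empty⟩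
  have hbddA : BddAbove A := ⟨τ, fun t ht => ht.1.2⟩
  have hAne : A.Nonempty := ⟨0, h0A⟩
  set T := sSup A with hT
  have hT0 : 0 ≤ T := le_csSup hbddA h0A
  have hTτ : T ≤ τ := csSup_le hAne fun t ht => ht.1.2
  have hPT : IntegrableOn g (Ioc 0 T) volume := by
    obtain ⟨u, hmono, hutend, huA⟩ := exists_seq_tendsto_sSup hAne hbddA
    have haesm : AEStronglyMeasurable g (volume.restrict (⋃ n, Ioc (0:ℝ) (u n))) := by
      rw [aestronglyMeasurable_iUnion_iff]
      exact fun n => (huA n).2.aestronglyMeasurable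
    have hsub : volume.restrict (Ioc (0:ℝ) T) ≤ volume.restrict (⋃ n, Ioc (0:ℝ) (u n)) := by
      refine Measure.restrict_mono' ?_ le_rfl
      rw [ae_le_set]
      refine measure_mono_null (fun p hp => ?_) (measure_singleton T)
      obtain ⟨⟨hp0, hpT⟩, hpn⟩ := hp
      rcases lt_or_eq_of_le hpT with hlt | heqq
      · exfalso
        obtain ⟨n, hn⟩ := (hutend.eventually (eventually_gt_nhds hlt)).exists
        exact hpn (Set.mem_iUnion.2 ⟨n, ⟨hp0, hn.le⟩⟩)
      · exact heqq
    have haesm' : AEStronglyMeasurable g (volume.restrict (Ioc (0:ℝ) T)) :=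
      haesm.mono_measure hsub
    haveI : IsFiniteMeasure (volume.restrict (Ioc (0:ℝ) T)) :=
      ⟨by simpa using measure_Ioc_lt_top⟩
    refine ⟨haesm', HasFiniteIntegral.of_bounded (C := |σ| * S.Mf) ?_⟩
    exact (ae_restrict_iff' measurableSet_Ioc).2 (Filter.Eventually.of_forall
      fun s hs => hbound s ⟨hs.1.le, hs.2.trans hTτ⟩)
  rcases eq_or_lt_of_le hTτ with hTeq | hTlt
  · rwa [hTeq] at hPT
  by_cases hex : ∃ t ∈ Set.Ioc T τ, IntegrableOn g (Ioc 0 t) volume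
  · obtain ⟨t, htm, hti⟩ := hex
    exact absurd (le_csSup hbddA ⟨⟨hT0.trans htm.1.le, htm.2⟩, hti⟩) (not_le.2 htm.1)
  · push_neg at hex
    have hyconst : ∀ t ∈ Set.Ioc T τ, y t = x := by
      intro t htm
      have h1 := heq t ⟨hT0.trans htm.1.le, htm.2⟩
      have h2 : ¬ IntervalIntegrable g volume 0 t := by
        rw [intervalIntegrable_iff_integrableOn_Ioc_of_le (hT0.trans htm.1.le)]
        exact hex t htm
      rw [intervalIntegral.integral_undef h2] at h1
      simpa using h1
    have hxK : x ∈ closure S.Ω := hy0 ▸ hyK 0 ⟨le_rfl, hτ⟩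
    have hint2 : IntegrableOn g (Ioc T τ) volume := by
      have hi : IntegrableOn (fun s => (σ * S.f x (α s)) • α s) (Ioc T τ) volume := by
        haveI : IsFiniteMeasure (volume.restrict (Ioc T τ)) :=
          ⟨by simpa using measure_Ioc_lt_top⟩
        refine ⟨(S.meas_const_pt hxK hα σ).aestronglyMeasurable,
          HasFiniteIntegral.of_bounded (C := |σ| * S.Mf) ?_⟩
        exact (ae_restrict_iff' measurableSet_Ioc).2 (Filter.Eventually.of_forall
          fun s _ => S.f_bound hxK (hα.2 s) σ)
      refine hi.congr_fun (fun s hs => ?_) measurableSet_Ioc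
      simp only [hg, hyconst s hs]
    have hun := hPT.union hint2
    rwa [Set.Ioc_union_Ioc_eq_Ioc hT0 hTτ] at hun

lemma traj_intervalIntegrable {σ τ : ℝ} {x : Pt d} {y α : ℝ → Pt d}
    (h : IsTrajCtrl (closure S.Ω) S.f σ x τ y α) :
    IntervalIntegrable (fun s => (σ * S.f (y s) (α s)) • α s) volume 0 τ :=
  (intervalIntegrable_iff_integrableOn_Ioc_of_le h.1).2 (S.traj_integrable h)

lemma traj_reverse {σ τ : ℝ} {x : Pt d} {y α : ℝ → Pt d}
    (h : IsTrajCtrl (closure S.Ω) S.f σ x τ y α) :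
    IsTrajCtrl (closure S.Ω) S.f (-σ) (y τ) τ (fun t => y (τ - t)) (fun t => α (τ - t)) := by
  have hint := S.traj_intervalIntegrable h
  obtain ⟨hτ, hy0, hyK, hα, heq⟩ := h
  set g : ℝ → Pt d := fun s => (σ * S.f (y s) (α s)) • α s with hg
  refine ⟨hτ, by simp, fun t ht => hyK (τ - t) ⟨by linarith [ht.1, ht.2], by linarith [ht.1]⟩,
    ⟨hα.1.comp (measurable_const.sub measurable_id), fun t => hα.2 _⟩, ?_⟩
  intro t ht
  have hneg : (fun s => (-σ * S.f (y (τ - s)) (α (τ - s))) • α (τ - s))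
      = fun s => -(g (τ - s)) := by
    funext s; rw [hg]; simp only; rw [neg_mul, neg_smul]
  show y (τ - t) = y τ + ∫ s in (0:ℝ)..t, (-σ * S.f (y (τ - s)) (α (τ - s))) • α (τ - s)
  rw [hneg, intervalIntegral.integral_neg]
  have hcs : (∫ s in (0:ℝ)..t, g (τ - s)) = ∫ s in (τ - t)..(τ - 0), g s :=
    intervalIntegral.integral_comp_sub_left g τ
  rw [hcs, sub_zero]
  have h1 : IntervalIntegrable g volume 0 (τ - t) := by
    refine hint.mono_set ?_
    rw [Set.uIcc_of_le (by linarith [ht.1, ht.2] : (0:ℝ) ≤ τ - t),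
      Set.uIcc_of_le hτ]
    exact Set.Icc_subset_Icc le_rfl (by linarith [ht.1])
  have h2 : IntervalIntegrable g volume (τ - t) τ := by
    refine hint.mono_set ?_
    rw [Set.uIcc_of_le (by linarith [ht.1] : τ - t ≤ τ), Set.uIcc_of_le hτ]
    exact Set.Icc_subset_Icc (by linarith [ht.1, ht.2]) le_rfl
  have hadd := intervalIntegral.integral_add_adjacent_intervals h1 h2
  have e1 : y τ = x + ∫ s in (0:ℝ)..τ, g s := heq τ ⟨hτ, le_rfl⟩
  have e2 : y (τ - t) = x + ∫ s in (0:ℝ)..(τ - t), g s :=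
    heq (τ - t) ⟨by linarith [ht.1, ht.2], by linarith [ht.1]⟩
  rw [e1, e2, ← hadd]
  abel

lemma reach_end_mem {σ τ : ℝ} {x : Pt d} {Ks : Set (Pt d)} (hx : x ∈ Ks)
    {y α : ℝ → Pt d} (h : IsTrajCtrl (closure S.Ω) S.f σ x τ y α) :
    (fun t => y (τ - t)) τ ∈ Ks := by
  show y (τ - τ) ∈ Ks
  rw [sub_self, h.2.1]; exact hx

lemma reach_rev {σ τ : ℝ} {x : Pt d} {Ks Kt : Set (Pt d)} (hx : x ∈ Ks)
    (hτ : τ ∈ reachTimes (closure S.Ω) S.f σ Kt x) :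
    ∃ z ∈ Kt, τ ∈ reachTimes (closure S.Ω) S.f (-σ) Ks z := by
  obtain ⟨y, ⟨α, hT⟩, hend⟩ := hτ
  exact ⟨y τ, hend, ⟨fun t => y (τ - t), ⟨fun t => α (τ - t), S.traj_reverse hT⟩,
    S.reach_end_mem hx hT⟩⟩

lemma iInf_minTime_le (σ : ℝ) (Ks Kt : Set (Pt d)) :
    (⨅ z ∈ Kt, minTime (closure S.Ω) S.f (-σ) Ks z) ≤
      ⨅ x ∈ Ks, minTime (closure S.Ω) S.f σ Kt x := by
  refine le_iInf₂ fun x hx => ?_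
  show _ ≤ ⨅ τ ∈ reachTimes (closure S.Ω) S.f σ Kt x, ENNReal.ofReal τ
  refine le_iInf₂ fun τ hτ => ?_
  obtain ⟨z, hz, hτ'⟩ := S.reach_rev hx hτ
  exact le_trans (iInf₂_le z hz) (iInf₂_le τ hτ')

lemma iInf_minTime_eq (σ : ℝ) (Ks Kt : Set (Pt d)) :
    (⨅ x ∈ Ks, minTime (closure S.Ω) S.f σ Kt x) =
      ⨅ z ∈ Kt, minTime (closure S.Ω) S.f (-σ) Ks z := by
  refine le_antisymm ?_ (S.iInf_minTime_le σ Ks Kt)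
  have h := S.iInf_minTime_le (-σ) Kt Ks
  rwa [neg_neg] at h

lemma minTime_eq_iInf {σ : ℝ} {Ks Kt : Set (Pt d)} {x : Pt d} (hx : x ∈ Ks)
    (hmin : ∀ z ∈ Ks, val (closure S.Ω) S.f σ Kt x ≤ val (closure S.Ω) S.f σ Kt z) :
    minTime (closure S.Ω) S.f σ Kt x = ⨅ x' ∈ Ks, minTime (closure S.Ω) S.f σ Kt x' :=
  le_antisymm (le_iInf₂ fun x' hx' => kruzkov_le_iff.1 (hmin x' hx')) (iInf₂_le x hx)

lemma gamma_incl (σ : ℝ) (Ks Kt : Set (Pt d)) :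
    (⋃ x ∈ {x ∈ Ks | ∀ z ∈ Ks, val (closure S.Ω) S.f σ Kt x ≤ val (closure S.Ω) S.f σ Kt z},
      geodPts (closure S.Ω) S.f σ Kt x) ⊆
    ⋃ x ∈ {x ∈ Kt | ∀ z ∈ Kt,
        val (closure S.Ω) S.f (-σ) Ks x ≤ val (closure S.Ω) S.f (-σ) Ks z},
      geodPts (closure S.Ω) S.f (-σ) Ks x := by
  intro p hp
  rw [Set.mem_iUnion₂] at hp
  obtain ⟨x, ⟨hxK, hxmin⟩, τ, y, ⟨α, hT⟩, hyend, hopt, t, ht, hpt⟩ := hp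
  have hrevT := S.traj_reverse hT
  have hreach : τ ∈ reachTimes (closure S.Ω) S.f (-σ) Ks (y τ) :=
    ⟨fun s => y (τ - s), ⟨fun s => α (τ - s), hrevT⟩, S.reach_end_mem hxK hT⟩
  have h1 : minTime (closure S.Ω) S.f (-σ) Ks (y τ) ≤ ENNReal.ofReal τ := iInf₂_le τ hreach
  have hxInf := S.minTime_eq_iInf hxK hxmin
  have hM := S.iInf_minTime_eq σ Ks Kt
  have h4 : (⨅ w ∈ Kt, minTime (closure S.Ω) S.f (-σ) Ks w)
      ≤ minTime (closure S.Ω) S.f (-σ) Ks (y τ) := iInf₂_le (y τ) hyend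
  have hchain : ENNReal.ofReal τ = ⨅ w ∈ Kt, minTime (closure S.Ω) S.f (-σ) Ks w := by
    rw [hopt, hxInf, hM]
  have hkey : minTime (closure S.Ω) S.f (-σ) Ks (y τ) = ENNReal.ofReal τ :=
    le_antisymm h1 (by rw [hchain]; exact h4)
  have hzmin : ∀ w ∈ Kt, val (closure S.Ω) S.f (-σ) Ks (y τ)
      ≤ val (closure S.Ω) S.f (-σ) Ks w := by
    intro w hw
    refine kruzkov_le_iff.2 ?_
    rw [hkey, hchain]
    exact iInf₂_le w hw
  rw [Set.mem_iUnion₂]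
  refine ⟨y τ, ⟨hyend, hzmin⟩, τ, fun s => y (τ - s),
    ⟨fun s => α (τ - s), hrevT⟩, S.reach_end_mem hxK hT, hkey.symm,
    τ - t, ⟨by linarith [ht.1, ht.2], by linarith [ht.1]⟩, ?_⟩
  show p = y (τ - (τ - t))
  rw [sub_sub_cancel]; exact hpt

end Setting

/-- The forward and reverse geodesic point sets coincide, and if this common set
is nonempty, the infima of the value functions (and of the minimum times) over the source and
destination coincide. -/
theorem geodesic_sets_coincide {d : ℕ} (S : Setting d)
    (hvd : ContinuousOn S.vd (closure S.Ω)) (hvs : ContinuousOn S.vs (closure S.Ω)) :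
    S.GammaFwd = S.GammaRev ∧
    (S.GammaFwd.Nonempty →
      sInf (S.vd '' S.Ksrc) = sInf (S.vs '' S.Kdst) ∧
      (⨅ x ∈ S.Ksrc, S.Td x) = (⨅ x ∈ S.Kdst, S.Ts x)) := by
  have h12 : S.GammaFwd ⊆ S.GammaRev := S.gamma_incl 1 S.Ksrc S.Kdst
  have h21 : S.GammaRev ⊆ S.GammaFwd := by
    have h := S.gamma_incl (-1) S.Kdst S.Ksrc
    rwa [neg_neg] at h
  have heq : S.GammaFwd = S.GammaRev := Set.Subset.antisymm h12 h21
  refine ⟨heq, fun hne => ?_⟩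
  obtain ⟨p, hp⟩ := hne
  have hp2 : p ∈ S.GammaRev := heq ▸ hp
  rw [Setting.GammaFwd, Set.mem_iUnion₂] at hp
  obtain ⟨x, hx, -⟩ := hp
  rw [Setting.GammaRev, Set.mem_iUnion₂] at hp2
  obtain ⟨z, hz, -⟩ := hp2
  have hsrc : sInf (S.vd '' S.Ksrc) = S.vd x :=
    IsLeast.csInf_eq ⟨Set.mem_image_of_mem _ hx.1, by rintro _ ⟨w, hw, rfl⟩; exact hx.2 w hw⟩
  have hdst : sInf (S.vs '' S.Kdst) = S.vs z :=
    IsLeast.csInf_eq ⟨Set.mem_image_of_mem _ hz.1, by rintro _ ⟨w, hw, rfl⟩; exact hz.2 w hw⟩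
  have e1 := S.minTime_eq_iInf (σ := 1) (Kt := S.Kdst) hx.1 hx.2
  have e2 := S.minTime_eq_iInf (σ := -1) (Kt := S.Ksrc) hz.1 hz.2
  have e3 := S.iInf_minTime_eq 1 S.Ksrc S.Kdst
  have hvd : S.vd x = S.vs z := congrArg kruzkov (e1.trans (e3.trans e2.symm))
  exact ⟨hsrc.trans (hvd.trans hdst.symm), e3⟩
end
end

section
/- Let d ≥ 1, h > 0, R > 0, L > 0, and let φ : [0,L] → ℝ^d be a 1-Lipschitz curve. Let G ⊆ h·ℤ^d be a set of lattice points such that every g ∈ G satisfies ‖g − φ(t)‖ ≤ R for some t ∈ [0,L] (Euclidean norm). Then G is finite and its cardinality satisfies card(G) ≤ (⌈L/R⌉ + 2) · ((3R + h)/h)^d. -/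
open Set Metric MeasureTheory
open scoped ENNReal

noncomputable section

/-!
The nodes `φ (min (k * R) L)`, `k = 0, …, ⌈L / R⌉`, are at most `R` apart in time along the
1-Lipschitz curve, so every point of the `R`-tube lies within `3R/2` of a node. The lattice
points in each ball are counted coordinatewise rather than by volume: the integer coordinates of
the points of `h·ℤ^d` in a closed ball of radius `r` lie in a box with at most `(2r + h)/h` values
per axis.
-/

theorem Int.card_Icc_ceil_floor_le {α : Type*} [Field α] [LinearOrder α] [IsStrictOrderedRing α]
    [FloorRing α] {a b : α} (hab : a ≤ b + 1) :
    ((Finset.Icc ⌈a⌉ ⌊b⌋).card : α) ≤ b - a + 1 := by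
  have hcast : ((Finset.Icc ⌈a⌉ ⌊b⌋).card : α) = max ((⌊b⌋ + 1 - ⌈a⌉ : ℤ) : α) 0 := by
    rw [Int.card_Icc, ← Int.cast_natCast, Int.toNat_eq_max]; push_cast; rfl
  rw [hcast]
  push_cast
  exact max_le (by linarith [Int.floor_le b, Int.le_ceil a]) (by linarith)

theorem Pi.card_Icc_ceil_floor_le {ι α : Type*} [Fintype ι] [DecidableEq ι] [Field α]
    [LinearOrder α] [IsStrictOrderedRing α] [FloorRing α] {a b : ι → α}
    (hab : ∀ i, a i ≤ b i + 1) :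
    ((Finset.Icc (fun i => ⌈a i⌉) (fun i => ⌊b i⌋)).card : α) ≤ ∏ i, (b i - a i + 1) := by
  rw [Pi.card_Icc, Nat.cast_prod]
  exact Finset.prod_le_prod (fun _ _ => Nat.cast_nonneg _)
    fun i _ => Int.card_Icc_ceil_floor_le (hab i)

def scaledLattice (ι : Type*) (h : ℝ) : Set (EuclideanSpace ℝ ι) :=
  {g | ∀ i, ∃ z : ℤ, g i = h * z}

section ScaledLattice

variable {ι : Type*} [Fintype ι] {h r : ℝ}

theorem scaledLattice_inter_closedBall_subset [DecidableEq ι] (hh : 0 < h)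
    (c : EuclideanSpace ℝ ι) :
    scaledLattice ι h ∩ closedBall c r ⊆
      (fun z : ι → ℤ => WithLp.toLp 2 fun i => h * z i) ''
        Finset.Icc (fun i => ⌈(c i - r) / h⌉) (fun i => ⌊(c i + r) / h⌋) := by
  rintro g ⟨hg, hgc⟩
  choose z hz using hg
  refine ⟨z, ?_, by ext i; simp [hz]⟩
  have hcoord : ∀ i, |g i - c i| ≤ r := fun i => by
    simpa using (PiLp.norm_apply_le (g - c) i).trans (mem_closedBall_iff_norm.mp hgc)
  simp only [Finset.coe_Icc, mem_Icc, Pi.le_def]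
  refine ⟨fun i => Int.ceil_le.mpr ?_, fun i => Int.le_floor.mpr ?_⟩
  · rw [div_le_iff₀ hh]; linarith [hz i, (abs_le.mp (hcoord i)).1]
  · rw [le_div_iff₀ hh]; linarith [hz i, (abs_le.mp (hcoord i)).2]

theorem finite_scaledLattice_inter_closedBall (hh : 0 < h) (c : EuclideanSpace ℝ ι) :
    (scaledLattice ι h ∩ closedBall c r).Finite := by
  classical
  exact ((Finset.finite_toSet _).image _).subset (scaledLattice_inter_closedBall_subset hh c)

theorem ncard_scaledLattice_inter_closedBall_le (hh : 0 < h) (hr : 0 ≤ r)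
    (c : EuclideanSpace ℝ ι) :
    ((scaledLattice ι h ∩ closedBall c r).ncard : ℝ) ≤ ((2 * r + h) / h) ^ Fintype.card ι := by
  classical
  have hbox : ∀ i, (c i - r) / h ≤ (c i + r) / h + 1 := fun i => by
    rw [div_add_one hh.ne']; gcongr; linarith
  calc ((scaledLattice ι h ∩ closedBall c r).ncard : ℝ)
      ≤ (Finset.Icc (fun i => ⌈(c i - r) / h⌉) (fun i => ⌊(c i + r) / h⌋)).card := by
        rw [← Set.ncard_coe_finset]
        exact_mod_cast (Set.ncard_le_ncard (scaledLattice_inter_closedBall_subset hh c)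
          ((Finset.finite_toSet _).image _)).trans Set.ncard_image_le
    _ ≤ ∏ i, ((c i + r) / h - (c i - r) / h + 1) := Pi.card_Icc_ceil_floor_le hbox
    _ = ∏ _i : ι, (2 * r + h) / h := Finset.prod_congr rfl fun i _ => by field_simp; ring
    _ = ((2 * r + h) / h) ^ Fintype.card ι := by rw [Finset.prod_const, Finset.card_univ]

end ScaledLattice

theorem exists_le_ceil_abs_sub_min_mul_le {t L R : ℝ} (ht : t ∈ Icc 0 L) (hR : 0 < R) :
    ∃ k ≤ ⌈L / R⌉₊, |t - min (k * R) L| ≤ R / 2 := by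
  obtain ⟨ht0, htL⟩ := ht
  set k := ⌊t / R + 1 / 2⌋₊
  have hk_le : (k : ℝ) * R ≤ t + R / 2 := by
    have := mul_le_mul_of_nonneg_right (Nat.floor_le (by positivity : 0 ≤ t / R + 1 / 2)) hR.le
    rw [add_mul, div_mul_cancel₀ _ hR.ne'] at this
    linarith
  have hk_gt : t - R / 2 < k * R := by
    have := mul_lt_mul_of_pos_right (Nat.lt_floor_add_one (t / R + 1 / 2)) hR
    rw [add_mul, add_mul, div_mul_cancel₀ _ hR.ne'] at this
    linarith
  refine ⟨k, Nat.lt_succ_iff.mp ((Nat.floor_lt (by positivity)).mpr ?_), ?_⟩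
  · have : t / R ≤ ⌈L / R⌉₊ := (div_le_div_of_nonneg_right htL hR.le).trans (Nat.le_ceil _)
    push_cast
    linarith
  · rcases le_total ((k : ℝ) * R) L with hkL | hLk
    · rw [min_eq_left hkL, abs_le]; constructor <;> linarith
    · rw [min_eq_right hLk, abs_le]; constructor <;> linarith

theorem LipschitzOnWith.exists_le_ceil_dist_le {E : Type*} [PseudoMetricSpace E] {φ : ℝ → E}
    {L R t : ℝ} (hφ : LipschitzOnWith 1 φ (Icc 0 L)) (hR : 0 < R) (ht : t ∈ Icc 0 L) (x : E) :
    ∃ k ≤ ⌈L / R⌉₊, dist x (φ (min (k * R) L)) ≤ dist x (φ t) + R / 2 := by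
  obtain ⟨k, hk, hnear⟩ := exists_le_ceil_abs_sub_min_mul_le ht hR
  have hnode : min (k * R) L ∈ Icc 0 L :=
    ⟨le_min (by positivity) (ht.1.trans ht.2), min_le_right _ _⟩
  have hstep : dist (φ t) (φ (min (k * R) L)) ≤ R / 2 :=
    calc dist (φ t) (φ (min (k * R) L)) ≤ 1 * dist t (min (k * R) L) :=
          hφ.dist_le_mul t ht _ hnode
      _ ≤ R / 2 := by rwa [one_mul, Real.dist_eq]
  exact ⟨k, hk, (dist_triangle _ (φ t) _).trans (add_le_add_right hstep _)⟩

theorem lattice_tube_counting_general (d : ℕ)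
    (h R L : ℝ) (hh : 0 < h) (hR : 0 < R)
    (φ : ℝ → Pt d) (hφ : LipschitzOnWith 1 φ (Icc 0 L))
    (G : Set (Pt d))
    (hlat : ∀ g ∈ G, ∀ i : Fin d, ∃ z : ℤ, g i = h * z)
    (htube : ∀ g ∈ G, ∃ t ∈ Icc (0:ℝ) L, ‖g - φ t‖ ≤ R) :
    G.Finite ∧ (G.ncard : ℝ) ≤ ((⌈L / R⌉₊ : ℝ) + 2) * ((3 * R + h) / h) ^ d := by
  set N := ⌈L / R⌉₊
  set nodeBall : ℕ → Set (Pt d) := fun k =>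
    scaledLattice (Fin d) h ∩ closedBall (φ (min (k * R) L)) (3 * R / 2)
  have hcover : G ⊆ ⋃ k ∈ Finset.range (N + 1), nodeBall k := by
    intro g hg
    obtain ⟨t, ht, hgt⟩ := htube g hg
    obtain ⟨k, hk, hdist⟩ := hφ.exists_le_ceil_dist_le hR ht g
    rw [← dist_eq_norm] at hgt
    simp only [mem_iUnion, Finset.mem_range]
    exact ⟨k, Nat.lt_succ_of_le hk, hlat g hg, mem_closedBall.mpr (by linarith)⟩
  have hfin : (⋃ k ∈ Finset.range (N + 1), nodeBall k).Finite :=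
    (Finset.finite_toSet _).biUnion fun k _ => finite_scaledLattice_inter_closedBall hh _
  refine ⟨hfin.subset hcover, ?_⟩
  calc (G.ncard : ℝ) ≤ ∑ k ∈ Finset.range (N + 1), ((nodeBall k).ncard : ℝ) := by
        exact_mod_cast (Set.ncard_le_ncard hcover hfin).trans (Finset.set_ncard_biUnion_le _ _)
    _ ≤ ∑ k ∈ Finset.range (N + 1), ((3 * R + h) / h) ^ d := by
        gcongr with k
        refine (ncard_scaledLattice_inter_closedBall_le hh (by positivity) _).trans_eq ?_
        rw [Fintype.card_fin]; ring_nf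
    _ ≤ ((N : ℝ) + 2) * ((3 * R + h) / h) ^ d := by
        rw [Finset.sum_const, Finset.card_range, nsmul_eq_mul]; push_cast; gcongr; norm_num

/-- lattice-point counting in a tube of radius `R` around a 1-Lipschitz curve:
any set `G` of points of the lattice `h·ℤ^d` all lying within distance `R` of the curve
`φ : [0,L] → ℝ^d` is finite, with `card(G) ≤ (⌈L/R⌉ + 2)·((3R+h)/h)^d`. -/
theorem lattice_tube_counting (d : ℕ) (hd : 1 ≤ d)
    (h R L : ℝ) (hh : 0 < h) (hR : 0 < R) (hL : 0 < L)
    (φ : ℝ → Pt d) (hφ : LipschitzOnWith 1 φ (Icc 0 L))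
    (G : Set (Pt d))
    (hlat : ∀ g ∈ G, ∀ i : Fin d, ∃ z : ℤ, g i = h * z)
    (htube : ∀ g ∈ G, ∃ t ∈ Icc (0:ℝ) L, ‖g - φ t‖ ≤ R) :
    G.Finite ∧ (G.ncard : ℝ) ≤ ((⌈L / R⌉₊ : ℝ) + 2) * ((3 * R + h) / h) ^ d :=
  lattice_tube_counting_general d h R L hh hR φ hφ G hlat htube
end
end
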